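/- arXiv:1905.09626 — 5 statements merged into one kernel-verified Lean document; each statement's English description precedes it below -/
import Mathlib

section
/- If (A,B) is a matrix factorization of an irreducible polynomial f in a polynomial ring S = k[x_0,...,x_n] (with k a field), then det(A) = c·f^a and det(B) = c'·f^b for nonzero constants c, c' ∈ k and nonnegative integers a, b with a + b = n, where the matrices are n×n and all entries of A, B are homogeneous with deg(A_{ij})·deg(B entries) arranged so AB = f·Id; in particular det(A) is a constant times a power of f. -/
open MvPolynomial

private lemma mv_unit_eq_C {k : Type*} [Field k] :
    ∀ (m : ℕ) (p : MvPolynomial (Fin m) k), IsUnit p → ∃ c : k, c ≠ 0 ∧ p = C c := by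
  intro m
  induction m with
  | zero =>
    intro p hp
    refine ⟨p.coeff 0, ?_, eq_C_of_isEmpty p⟩
    intro h
    have : p = 0 := by rw [eq_C_of_isEmpty p, h, map_zero]
    exact hp.ne_zero this
  | succ m ih =>
    intro p hp
    have hp' : IsUnit (finSuccEquiv k m p) := hp.map (finSuccEquiv k m)
    obtain ⟨r, hr, hrp⟩ := Polynomial.isUnit_iff.mp hp'
    obtain ⟨c, hc, rfl⟩ := ih r hr
    refine ⟨c, hc, ?_⟩
    have := congrArg (finSuccEquiv k m).symm hrp
    rw [AlgEquiv.symm_apply_apply] at this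
    rw [← this]
    have hC : (finSuccEquiv k m).symm (Polynomial.C (C c)) = C c := by
      have := MvPolynomial.finSuccEquiv_comp_C_eq_C (R := k) m
      exact congrFun (congrArg (fun g => g.toFun) this) c
    rw [hC]

theorem stmt_2 {k : Type*} [Field k] {n d : ℕ}
    (f : MvPolynomial (Fin (n + 1)) k)
    (hirr : Irreducible f) (hhom : f.IsHomogeneous d)
    (A B : Matrix (Fin n) (Fin n) (MvPolynomial (Fin (n + 1)) k))
    (hAB : A * B = f • (1 : Matrix (Fin n) (Fin n) (MvPolynomial (Fin (n + 1)) k)))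
    (hBA : B * A = f • (1 : Matrix (Fin n) (Fin n) (MvPolynomial (Fin (n + 1)) k))) :
    ∃ (c c' : k) (a b : ℕ), c ≠ 0 ∧ c' ≠ 0 ∧ a + b = n ∧
      A.det = C c * f ^ a ∧ B.det = C c' * f ^ b := by
  have hf0 : f ≠ 0 := hirr.ne_zero
  have hprime : Prime f := UniqueFactorizationMonoid.irreducible_iff_prime.mp hirr
  have key : A.det * B.det = f ^ n := by
    have h := congrArg Matrix.det hAB
    rwa [Matrix.det_mul, Matrix.det_smul, Matrix.det_one, mul_one, Fintype.card_fin] at h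
  have hdvd : A.det ∣ f ^ n := ⟨B.det, key.symm⟩
  obtain ⟨a, hale, hassoc⟩ := (dvd_prime_pow hprime n).mp hdvd
  obtain ⟨u, hu⟩ := hassoc
  obtain ⟨c, hc, hCc⟩ := mv_unit_eq_C (n + 1) (↑u⁻¹ : MvPolynomial (Fin (n + 1)) k) u⁻¹.isUnit
  have hA : A.det = C c * f ^ a := by
    have : A.det = f ^ a * ↑u⁻¹ := by
      rw [← hu, mul_assoc, Units.mul_inv_eq_one.mpr rfl, mul_one]
    rw [this, hCc, mul_comm]
  refine ⟨c, c⁻¹, a, n - a, hc, inv_ne_zero hc, Nat.add_sub_cancel' hale, hA, ?_⟩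
  have hsplit : f ^ a * (C c * B.det) = f ^ a * f ^ (n - a) := by
    calc f ^ a * (C c * B.det) = (C c * f ^ a) * B.det := by ring
      _ = f ^ n := by rw [← hA, key]
      _ = f ^ a * f ^ (n - a) := by rw [← pow_add, Nat.add_sub_cancel' hale]
  have hCB : C c * B.det = f ^ (n - a) := mul_left_cancel₀ (pow_ne_zero _ hf0) hsplit
  rw [← hCB, ← mul_assoc, ← C_mul, inv_mul_cancel₀ hc, C_1, one_mul]
end

section
/- Let f be a homogeneous cubic form in 6 variables over ℂ that can be written as f = ℓ_{1,1}ℓ_{1,2}ℓ_{1,3} + ℓ_{2,1}ℓ_{2,2}ℓ_{2,3} + ℓ_{3,1}ℓ_{3,2}ℓ_{3,3} + ℓ_{4,1}ℓ_{4,2}ℓ_{4,3} with each ℓ_{i,j} linear. Then there exist 27×27 matrices A_1, A_2, A_3 with linear entries such that A_1A_2A_3 = A_2A_3A_1 = A_3A_1A_2 = f·Id_{27}; in particular (A_1, A_2A_3) is a matrix factorization of f. -/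
/-!
Backelin–Herzog for three factors. If `D₀ N = N D₁`, `D₁ N = N D₂`, `D₀ D₁ D₂ = F` and `N³ = G`,
then in `(D₀ + a N)(D₁ + b N)(D₂ + c N)` every mixed term is `N D₁ D₂` or `N² D₂`, with
coefficients the elementary symmetric functions of `(a, b, c)`; for `(1, ω, ω²)`, `ω` a primitive
cube root of unity, these are `0, 0, 1`, so the product is `F + G`.

Given a cyclic factorization `B₀ B₁ B₂ = f` by `k × k` matrices and linear forms `m₀, m₁, m₂`,
take for `D_t` the block diagonal matrix `diag(B_t, B_{t+1}, B_{t+2})` and for `N` the block cyclic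
shift with blocks `m_c · 1`: this gives a cyclic factorization of `f + m₀ m₁ m₂` by
`3k × 3k` matrices with linear entries. Starting from the `1 × 1` factorization of one product
of linear forms, three steps give `27 × 27` matrices for a sum of four such products.
-/

open Matrix

theorem add_smul_mul_add_smul_mul_add_smul {K A : Type*} [CommRing K] [Ring A] [Algebra K A]
    {D₀ D₁ D₂ N F G : A} {a b c : K}
    (h₀ : D₀ * N = N * D₁) (h₁ : D₁ * N = N * D₂)
    (hD : D₀ * D₁ * D₂ = F) (hN : N ^ 3 = G)
    (e₁ : a + b + c = 0) (e₂ : a * b + b * c + c * a = 0) (e₃ : a * b * c = 1) :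
    (D₀ + a • N) * (D₁ + b • N) * (D₂ + c • N) = F + G := by
  have lin₀ : D₀ * D₁ * N = N * D₁ * D₂ := by rw [mul_assoc, h₁, ← mul_assoc, h₀]
  have lin₁ : D₀ * N * D₂ = N * D₁ * D₂ := by rw [h₀]
  have quad₀ : D₀ * N * N = N * N * D₂ := by rw [h₀, mul_assoc, h₁, mul_assoc]
  have quad₁ : N * D₁ * N = N * N * D₂ := by rw [mul_assoc, h₁, mul_assoc]
  calc (D₀ + a • N) * (D₁ + b • N) * (D₂ + c • N)
      = D₀ * D₁ * D₂ + c • (D₀ * D₁ * N) + b • (D₀ * N * D₂) + a • (N * D₁ * D₂)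
        + (b * c) • (D₀ * N * N) + (a * c) • (N * D₁ * N) + (a * b) • (N * N * D₂)
        + (a * b * c) • N ^ 3 := by
        simp only [add_mul, mul_add, smul_mul_assoc, mul_smul_comm, pow_three, ← mul_assoc]
        module
    _ = F + (a + b + c) • (N * D₁ * D₂) + (a * b + b * c + c * a) • (N * N * D₂)
        + (a * b * c) • N ^ 3 := by
        rw [hD, lin₀, lin₁, quad₀, quad₁]; module
    _ = F + G := by rw [e₁, e₂, e₃, hN]; simp

section BackelinHerzog

variable {K S ι : Type*} [CommRing K] [CommRing S] [Algebra K S] [DecidableEq ι]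

def IsCyclicMatrixFactorization [Fintype ι] (f : S) (A : Fin 3 → Matrix ι ι S) : Prop :=
  ∀ t, A t * A (t + 1) * A (t + 2) = f • 1

/-- The block `m c • 1` sits at position `(c, c - 1)`; `c - 1` is written `c + 2` because
`simp` evaluates sums of numerals in `Fin 3` but not differences. -/
def cyclicShift (m : Fin 3 → S) : Matrix (Fin 3) (Fin 3) (Matrix ι ι S) :=
  of fun c d => if d = c + 2 then m c • 1 else 0

theorem cyclicShift_mul_apply [Fintype ι] (m : Fin 3 → S)
    (M : Matrix (Fin 3) (Fin 3) (Matrix ι ι S)) (c d : Fin 3) :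
    (cyclicShift m * M : Matrix (Fin 3) (Fin 3) (Matrix ι ι S)) c d = m c • M (c + 2) d := by
  simp [cyclicShift, mul_apply, ite_mul]

theorem cyclicShift_pow_three [Fintype ι] (m : Fin 3 → S) :
    (cyclicShift m : Matrix (Fin 3) (Fin 3) (Matrix ι ι S)) ^ 3 = (m 0 * m 1 * m 2) • 1 := by
  ext1 c d
  have hm : m c * m (c + 2) * m (c + 2 + 2) = m 0 * m 1 * m 2 := by
    fin_cases c <;> simp <;> ring
  rw [pow_three, cyclicShift_mul_apply, cyclicShift_mul_apply, Matrix.smul_apply, one_apply]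
  simp [cyclicShift, show c + 2 + 2 + 2 = c by grind, smul_smul]
  rw [← mul_assoc, hm]
  exact if_congr eq_comm rfl rfl

theorem diagonal_mul_cyclicShift [Fintype ι] (m : Fin 3 → S) (B : Fin 3 → Matrix ι ι S)
    (t : Fin 3) :
    diagonal (fun c => B (c + t)) * cyclicShift m =
      cyclicShift m * diagonal (fun c => B (c + (t + 1))) := by
  ext1 c d
  simp only [diagonal_mul, mul_diagonal, cyclicShift, of_apply]
  split_ifs with h
  · rw [h, show c + 2 + (t + 1) = c + t by grind, mul_smul_comm, smul_mul_assoc, mul_one, one_mul]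
  · simp

theorem diagonal_mul_diagonal_mul_diagonal_eq_smul_one [Fintype ι] {f : S}
    {B : Fin 3 → Matrix ι ι S} (hB : IsCyclicMatrixFactorization f B) (t : Fin 3) :
    diagonal (fun c => B (c + t)) * diagonal (fun c => B (c + (t + 1))) *
      diagonal (fun c => B (c + (t + 2))) = f • 1 := by
  ext1 c d
  simp only [diagonal_mul_diagonal, ← add_assoc, hB _, diagonal_apply, Matrix.smul_apply, one_apply,
    smul_ite, smul_zero]

def backelinHerzogStep (ω : K) (m : Fin 3 → S) (B : Fin 3 → Matrix ι ι S) (t : Fin 3) :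
    Matrix (Fin 3 × ι) (Fin 3 × ι) S :=
  comp (Fin 3) (Fin 3) ι ι S (diagonal (fun c => B (c + t)) + ω ^ (t : ℕ) • cyclicShift m)

theorem isCyclicMatrixFactorization_backelinHerzogStep [Fintype ι] {ω : K}
    (hω : ω ^ 2 + ω + 1 = 0) (m : Fin 3 → S) {f : S} {B : Fin 3 → Matrix ι ι S}
    (hB : IsCyclicMatrixFactorization f B) :
    IsCyclicMatrixFactorization (f + m 0 * m 1 * m 2) (backelinHerzogStep ω m B) := by
  intro t
  have key := add_smul_mul_add_smul_mul_add_smul (a := ω ^ (t : ℕ))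
    (b := ω ^ ((t + 1 : Fin 3) : ℕ)) (c := ω ^ ((t + 2 : Fin 3) : ℕ))
    (diagonal_mul_cyclicShift m B t)
    (by simpa [add_assoc, one_add_one_eq_two] using diagonal_mul_cyclicShift m B (t + 1))
    (diagonal_mul_diagonal_mul_diagonal_eq_smul_one hB t) (cyclicShift_pow_three m)
    (by fin_cases t <;> simp <;> linear_combination hω)
    (by fin_cases t <;> simp <;> linear_combination ω * hω)
    (by fin_cases t <;> simp <;> linear_combination (ω - 1) * hω)
  let φ := compAlgEquiv (Fin 3) ι S S
  calc _ = φ ((diagonal (fun c => B (c + t)) + ω ^ (t : ℕ) • cyclicShift m) *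
        (diagonal (fun c => B (c + (t + 1))) + ω ^ ((t + 1 : Fin 3) : ℕ) • cyclicShift m) *
        (diagonal (fun c => B (c + (t + 2))) + ω ^ ((t + 2 : Fin 3) : ℕ) • cyclicShift m)) := by
        simp only [map_mul]; rfl
    _ = (f + m 0 * m 1 * m 2) • 1 := by rw [key, ← add_smul, map_smul, map_one]

theorem backelinHerzogStep_apply_mem (M : Submodule K S) (ω : K) {m : Fin 3 → S}
    {B : Fin 3 → Matrix ι ι S} (hB : ∀ t i j, B t i j ∈ M) (hm : ∀ c, m c ∈ M) (t : Fin 3)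
    (x y : Fin 3 × ι) : backelinHerzogStep ω m B t x y ∈ M := by
  obtain ⟨⟨c, i⟩, ⟨d, j⟩⟩ := (x, y)
  simp only [backelinHerzogStep, comp_apply, Matrix.add_apply, diagonal_apply, Matrix.smul_apply,
    cyclicShift, of_apply]
  refine M.add_mem ?_ (M.smul_mem _ ?_) <;> split_ifs <;>
    simp [hB, one_apply, hm, M.zero_mem, apply_ite]

theorem exists_isCyclicMatrixFactorization_sum {ω : K} (hω : ω ^ 2 + ω + 1 = 0)
    (M : Submodule K S) :
    ∀ (n : ℕ) (ℓ : Fin (n + 1) → Fin 3 → S), (∀ i c, ℓ i c ∈ M) →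
      ∃ A : Fin 3 → Matrix (Fin (3 ^ n)) (Fin (3 ^ n)) S, (∀ t i j, A t i j ∈ M) ∧
        IsCyclicMatrixFactorization (∑ i, ℓ i 0 * ℓ i 1 * ℓ i 2) A
  | 0, ℓ, hℓ => by
    refine ⟨fun t => ℓ 0 t • 1, fun t i j => ?_, fun t => ?_⟩
    · simp [one_apply, apply_ite, hℓ, M.zero_mem]
    · simp only [smul_mul_smul, mul_one]
      congr 1
      fin_cases t <;> simp <;> ring
  | n + 1, ℓ, hℓ => by
    obtain ⟨A, hAM, hA⟩ :=
      exists_isCyclicMatrixFactorization_sum hω M n (fun i => ℓ i.castSucc) (fun i => hℓ _)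
    let φ := reindexAlgEquiv S S (finProdFinEquiv.trans (finCongr (pow_succ' 3 n).symm))
    refine ⟨fun t => φ (backelinHerzogStep ω (ℓ (Fin.last _)) A t),
      fun t i j => backelinHerzogStep_apply_mem M ω hAM (hℓ _) t _ _, fun t => ?_⟩
    rw [← map_mul, ← map_mul, isCyclicMatrixFactorization_backelinHerzogStep hω _ hA, map_smul,
      map_one, Fin.sum_univ_castSucc (fun i => ℓ i 0 * ℓ i 1 * ℓ i 2)]

end BackelinHerzog

theorem stmt_3 (f : MvPolynomial (Fin 6) ℂ)
    (ℓ : Fin 4 → Fin 3 → MvPolynomial (Fin 6) ℂ)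
    (hlin : ∀ i j, (ℓ i j).IsHomogeneous 1)
    (hf : f = ∑ i : Fin 4, (ℓ i 0 * ℓ i 1 * ℓ i 2)) :
    ∃ A₁ A₂ A₃ : Matrix (Fin 27) (Fin 27) (MvPolynomial (Fin 6) ℂ),
      (∀ i j, (A₁ i j).IsHomogeneous 1) ∧
      (∀ i j, (A₂ i j).IsHomogeneous 1) ∧
      (∀ i j, (A₃ i j).IsHomogeneous 1) ∧
      A₁ * A₂ * A₃ = f • (1 : Matrix (Fin 27) (Fin 27) (MvPolynomial (Fin 6) ℂ)) ∧
      A₂ * A₃ * A₁ = f • (1 : Matrix (Fin 27) (Fin 27) (MvPolynomial (Fin 6) ℂ)) ∧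
      A₃ * A₁ * A₂ = f • (1 : Matrix (Fin 27) (Fin 27) (MvPolynomial (Fin 6) ℂ)) ∧
      A₁ * (A₂ * A₃) = f • (1 : Matrix (Fin 27) (Fin 27) (MvPolynomial (Fin 6) ℂ)) ∧
      (A₂ * A₃) * A₁ = f • (1 : Matrix (Fin 27) (Fin 27) (MvPolynomial (Fin 6) ℂ)) := by
  obtain ⟨ω, hω⟩ : ∃ ω : ℂ, ω ^ 2 + ω + 1 = 0 := by
    have h := (Complex.isPrimitiveRoot_exp 3 (by norm_num)).geom_sum_eq_zero (by norm_num)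
    simp only [Finset.sum_range_succ, Finset.sum_range_zero] at h
    exact ⟨_, by linear_combination h⟩
  obtain ⟨A, hAM, hA⟩ := exists_isCyclicMatrixFactorization_sum hω
    (MvPolynomial.homogeneousSubmodule (Fin 6) ℂ 1) 3 ℓ hlin
  rw [← hf] at hA
  refine ⟨A 0, A 1, A 2, hAM 0, hAM 1, hAM 2, hA 0, hA 1, hA 2, ?_, hA 1⟩
  rw [← mul_assoc]
  exact hA 0
end

section
/- Let P be the generic 5×5 skew-symmetric matrix with entries x_{ij} (1 ≤ i < j ≤ 5), and define q_i = x_0 y_i + (−1)^{i−1} Pf(P,i) where Pf(P,i) is the Pfaffian of the 4×4 skew-symmetric matrix obtained by deleting the i-th row and column of P, and q'_i = (y_1,...,y_5)·P_i where P_i is the i-th column of P. Then the identity Σ_{i=1}^5 q_i q'_i = 0 holds identically in the polynomial ring k[x_0, x_{ij}, y_1,...,y_5]. -/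
open MvPolynomial

namespace Stmt6

/-- Variables: `x₀`, `x_{ij}` for `1 ≤ i < j ≤ 5` (0-indexed), and `y₁,…,y₅`. -/
abbrev V (_ : Type*) := Unit ⊕ {p : Fin 5 × Fin 5 // p.1 < p.2} ⊕ Fin 5

variable (k : Type*) [Field k]

noncomputable def x0 : MvPolynomial (V k) k := X (Sum.inl ())

noncomputable def y (i : Fin 5) : MvPolynomial (V k) k := X (Sum.inr (Sum.inr i))

/-- The generic 5×5 skew-symmetric matrix `P`. -/
noncomputable def P : Matrix (Fin 5) (Fin 5) (MvPolynomial (V k) k) := fun i j =>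
  if h : i < j then X (Sum.inr (Sum.inl ⟨(i, j), h⟩))
  else if h' : j < i then - X (Sum.inr (Sum.inl ⟨(j, i), h'⟩))
  else 0

/-- `Pf(P,i)`: the Pfaffian of the 4×4 skew-symmetric matrix obtained from `P`
by deleting the `i`-th row and column. -/
noncomputable def pfDel (i : Fin 5) : MvPolynomial (V k) k :=
  let s := i.succAbove
  P k (s 0) (s 1) * P k (s 2) (s 3)
    - P k (s 0) (s 2) * P k (s 1) (s 3)
    + P k (s 0) (s 3) * P k (s 1) (s 2)

/-- `qᵢ = x₀ yᵢ + (−1)^{i−1} Pf(P,i)` (here `i` is 0-indexed, so the sign is `(−1)^i`). -/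
noncomputable def q (i : Fin 5) : MvPolynomial (V k) k :=
  x0 k * y k i + (-1 : MvPolynomial (V k) k) ^ (i : ℕ) * pfDel k i

/-- `q'ᵢ = (y₁,…,y₅)·Pᵢ`, the `i`-th entry of the row vector `y·P`. -/
noncomputable def q' (i : Fin 5) : MvPolynomial (V k) k :=
  ∑ j : Fin 5, y k j * P k j i

set_option maxRecDepth 100000 in
set_option maxHeartbeats 2000000 in
theorem stmt_6 (h2 : (2 : k) ≠ 0) :
    ∑ i : Fin 5, q k i * q' k i = 0 := by
  have s00 : ((0:Fin 5)).succAbove 0 = (1 : Fin 5) := rfl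
  have s01 : ((0:Fin 5)).succAbove 1 = (2 : Fin 5) := rfl
  have s02 : ((0:Fin 5)).succAbove 2 = (3 : Fin 5) := rfl
  have s03 : ((0:Fin 5)).succAbove 3 = (4 : Fin 5) := rfl
  have s10 : ((1:Fin 5)).succAbove 0 = (0 : Fin 5) := rfl
  have s11 : ((1:Fin 5)).succAbove 1 = (2 : Fin 5) := rfl
  have s12 : ((1:Fin 5)).succAbove 2 = (3 : Fin 5) := rfl
  have s13 : ((1:Fin 5)).succAbove 3 = (4 : Fin 5) := rfl
  have s20 : ((2:Fin 5)).succAbove 0 = (0 : Fin 5) := rfl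
  have s21 : ((2:Fin 5)).succAbove 1 = (1 : Fin 5) := rfl
  have s22 : ((2:Fin 5)).succAbove 2 = (3 : Fin 5) := rfl
  have s23 : ((2:Fin 5)).succAbove 3 = (4 : Fin 5) := rfl
  have s30 : ((3:Fin 5)).succAbove 0 = (0 : Fin 5) := rfl
  have s31 : ((3:Fin 5)).succAbove 1 = (1 : Fin 5) := rfl
  have s32 : ((3:Fin 5)).succAbove 2 = (2 : Fin 5) := rfl
  have s33 : ((3:Fin 5)).succAbove 3 = (4 : Fin 5) := rfl
  have s40 : ((4:Fin 5)).succAbove 0 = (0 : Fin 5) := rfl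
  have s41 : ((4:Fin 5)).succAbove 1 = (1 : Fin 5) := rfl
  have s42 : ((4:Fin 5)).succAbove 2 = (2 : Fin 5) := rfl
  have s43 : ((4:Fin 5)).succAbove 3 = (3 : Fin 5) := rfl
  have h01 : P k 0 1 = X (Sum.inr (Sum.inl ⟨((0:Fin 5), (1:Fin 5)), by decide⟩)) := dif_pos (by decide)
  have h10 : P k 1 0 = - X (Sum.inr (Sum.inl ⟨((0:Fin 5), (1:Fin 5)), by decide⟩)) := by
    rw [P]; rw [dif_neg (by decide), dif_pos (by decide)]
  have h02 : P k 0 2 = X (Sum.inr (Sum.inl ⟨((0:Fin 5), (2:Fin 5)), by decide⟩)) := dif_pos (by decide)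
  have h20 : P k 2 0 = - X (Sum.inr (Sum.inl ⟨((0:Fin 5), (2:Fin 5)), by decide⟩)) := by
    rw [P]; rw [dif_neg (by decide), dif_pos (by decide)]
  have h03 : P k 0 3 = X (Sum.inr (Sum.inl ⟨((0:Fin 5), (3:Fin 5)), by decide⟩)) := dif_pos (by decide)
  have h30 : P k 3 0 = - X (Sum.inr (Sum.inl ⟨((0:Fin 5), (3:Fin 5)), by decide⟩)) := by
    rw [P]; rw [dif_neg (by decide), dif_pos (by decide)]
  have h04 : P k 0 4 = X (Sum.inr (Sum.inl ⟨((0:Fin 5), (4:Fin 5)), by decide⟩)) := dif_pos (by decide)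
  have h40 : P k 4 0 = - X (Sum.inr (Sum.inl ⟨((0:Fin 5), (4:Fin 5)), by decide⟩)) := by
    rw [P]; rw [dif_neg (by decide), dif_pos (by decide)]
  have h12 : P k 1 2 = X (Sum.inr (Sum.inl ⟨((1:Fin 5), (2:Fin 5)), by decide⟩)) := dif_pos (by decide)
  have h21 : P k 2 1 = - X (Sum.inr (Sum.inl ⟨((1:Fin 5), (2:Fin 5)), by decide⟩)) := by
    rw [P]; rw [dif_neg (by decide), dif_pos (by decide)]
  have h13 : P k 1 3 = X (Sum.inr (Sum.inl ⟨((1:Fin 5), (3:Fin 5)), by decide⟩)) := dif_pos (by decide)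
  have h31 : P k 3 1 = - X (Sum.inr (Sum.inl ⟨((1:Fin 5), (3:Fin 5)), by decide⟩)) := by
    rw [P]; rw [dif_neg (by decide), dif_pos (by decide)]
  have h14 : P k 1 4 = X (Sum.inr (Sum.inl ⟨((1:Fin 5), (4:Fin 5)), by decide⟩)) := dif_pos (by decide)
  have h41 : P k 4 1 = - X (Sum.inr (Sum.inl ⟨((1:Fin 5), (4:Fin 5)), by decide⟩)) := by
    rw [P]; rw [dif_neg (by decide), dif_pos (by decide)]
  have h23 : P k 2 3 = X (Sum.inr (Sum.inl ⟨((2:Fin 5), (3:Fin 5)), by decide⟩)) := dif_pos (by decide)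
  have h32 : P k 3 2 = - X (Sum.inr (Sum.inl ⟨((2:Fin 5), (3:Fin 5)), by decide⟩)) := by
    rw [P]; rw [dif_neg (by decide), dif_pos (by decide)]
  have h24 : P k 2 4 = X (Sum.inr (Sum.inl ⟨((2:Fin 5), (4:Fin 5)), by decide⟩)) := dif_pos (by decide)
  have h42 : P k 4 2 = - X (Sum.inr (Sum.inl ⟨((2:Fin 5), (4:Fin 5)), by decide⟩)) := by
    rw [P]; rw [dif_neg (by decide), dif_pos (by decide)]
  have h34 : P k 3 4 = X (Sum.inr (Sum.inl ⟨((3:Fin 5), (4:Fin 5)), by decide⟩)) := dif_pos (by decide)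
  have h43 : P k 4 3 = - X (Sum.inr (Sum.inl ⟨((3:Fin 5), (4:Fin 5)), by decide⟩)) := by
    rw [P]; rw [dif_neg (by decide), dif_pos (by decide)]
  have hd0 : P k 0 0 = 0 := by rw [P]; rw [dif_neg (by decide), dif_neg (by decide)]
  have hd1 : P k 1 1 = 0 := by rw [P]; rw [dif_neg (by decide), dif_neg (by decide)]
  have hd2 : P k 2 2 = 0 := by rw [P]; rw [dif_neg (by decide), dif_neg (by decide)]
  have hd3 : P k 3 3 = 0 := by rw [P]; rw [dif_neg (by decide), dif_neg (by decide)]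
  have hd4 : P k 4 4 = 0 := by rw [P]; rw [dif_neg (by decide), dif_neg (by decide)]
  have v0 : (((0:Fin 5)):ℕ) = 0 := rfl
  have v1 : (((1:Fin 5)):ℕ) = 1 := rfl
  have v2 : (((2:Fin 5)):ℕ) = 2 := rfl
  have v3 : (((3:Fin 5)):ℕ) = 3 := rfl
  have v4 : (((4:Fin 5)):ℕ) = 4 := rfl
  simp only [q, q', v0, v1, v2, v3, v4, pfDel, Fin.sum_univ_five, s00, s01, s02, s03, s10, s11, s12, s13, s20, s21, s22, s23, s30, s31, s32, s33, s40, s41, s42, s43, h01, h02, h03, h04, h10, h12, h13, h14, h20, h21, h23, h24, h30, h31, h32, h34, h40, h41, h42, h43, hd0, hd1, hd2, hd3, hd4]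
  ring

end Stmt6
end

section
/- Let F be a homogeneous cubic form in variables s_0,...,s_N over a field k of characteristic 0, and suppose the gradient map satisfies F(t_0,...,t_N) = F(s_0,...,s_N)², where t_i = ∂F/∂s_i. Suppose moreover ∂/∂t_i of F(t_0,...,t_N) equals s_i·F(s_0,...,s_N) under the substitution t_j = ∂F/∂s_j. Then, setting H = (∂²F/∂s_i∂s_j) the Hessian matrix and Q = (q_{ij}) where q_{ij} is the quadratic form such that ∂²F(t)/∂t_i∂t_j = (1/2)s_i s_j + q_{ij} after substitution, one has H·Q = Q·H = F·Id; i.e., (H, Q) is a matrix factorization of F. -/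
open MvPolynomial Finset Matrix

section Aux

variable {k : Type*} [CommRing k] {σ : Type*} [Fintype σ] [DecidableEq σ]

/-- Symmetry of second partial derivatives. -/
lemma aux_pderiv_comm (i j : σ) (p : MvPolynomial σ k) :
    pderiv i (pderiv j p) = pderiv j (pderiv i p) := by
  induction p using MvPolynomial.induction_on with
  | C a => simp
  | add p q hp hq => simp [hp, hq]
  | mul_X p l hp =>
      have hX : ∀ a b : σ, pderiv a (pderiv b (X l : MvPolynomial σ k)) = 0 := by
        intro a b
        rcases eq_or_ne b l with rfl | h
        · simp
        · simp [pderiv_X, Pi.single_apply, Ne.symm h]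
      simp only [pderiv_mul, map_add, hp, hX]
      ring

/-- Chain rule for `pderiv` composed with `bind₁`. -/
lemma aux_pderiv_bind₁ (f : σ → MvPolynomial σ k) (j : σ) (p : MvPolynomial σ k) :
    pderiv j (bind₁ f p) = ∑ l, bind₁ f (pderiv l p) * pderiv j (f l) := by
  induction p using MvPolynomial.induction_on with
  | C a => simp
  | add p q hp hq => simp [hp, hq, add_mul, Finset.sum_add_distrib]
  | mul_X p i hp =>
      have key : ∀ l, bind₁ f (pderiv l (p * X i)) * pderiv j (f l)
          = bind₁ f (pderiv l p) * pderiv j (f l) * f i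
            + bind₁ f p * (bind₁ f (pderiv l (X i)) * pderiv j (f l)) := by
        intro l
        simp only [pderiv_mul, map_add, _root_.map_mul, bind₁_X_right]
        ring
      have h2 : ∑ l, bind₁ f (pderiv l (X i : MvPolynomial σ k)) * pderiv j (f l)
          = pderiv j (f i) := by
        rw [Finset.sum_eq_single i]
        · simp
        · intro b _ hb
          simp [pderiv_X_of_ne (Ne.symm hb)]
        · intro h; exact absurd (Finset.mem_univ i) h
      simp only [key, Finset.sum_add_distrib, ← Finset.sum_mul, ← Finset.mul_sum, ← hp, h2]
      rw [_root_.map_mul, bind₁_X_right, pderiv_mul, hp]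

lemma aux_X_mul_pderiv_monomial (l : σ) (s : σ →₀ ℕ) (a : k) :
    X l * pderiv l (monomial s a) = (s l) • monomial s a := by
  rw [pderiv_monomial]
  rcases Nat.eq_zero_or_pos (s l) with h | h
  · simp [h]
  · have hs : Finsupp.single l 1 + (s - Finsupp.single l 1) = s := by
      ext m
      rcases eq_or_ne m l with rfl | hm
      · simp [Nat.add_sub_cancel' h]
      · simp [Finsupp.single_apply, Ne.symm hm]
    calc X l * monomial (s - Finsupp.single l 1) (a * s l)
        = monomial (Finsupp.single l 1) (1 : k) * monomial (s - Finsupp.single l 1) (a * s l) := by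
          rw [X]
      _ = monomial s (a * s l) := by rw [monomial_mul, hs, one_mul]
      _ = (s l) • monomial s a := by
          rw [smul_monomial]
          congr 1
          push_cast
          ring
  
/-- Euler's identity. -/
lemma aux_euler {n : ℕ} {F : MvPolynomial σ k} (hF : F.IsHomogeneous n) :
    ∑ l, X l * pderiv l F = n • F := by
  have step : ∑ l, X l * pderiv l F
      = ∑ s ∈ F.support, ∑ l, X l * pderiv l (monomial s (coeff s F)) := by
    rw [Finset.sum_comm]
    apply Finset.sum_congr rfl
    intro l _
    conv_lhs => rw [F.as_sum]
    rw [map_sum, Finset.mul_sum]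
  have : ∀ s ∈ F.support, ∑ l, X l * pderiv l (monomial s (coeff s F)) = n • monomial s (coeff s F) := by
    intro s hs
    have hdeg : ∑ l, s l = n := by
      have := hF (mem_support_iff.mp hs)
      rw [← this, Finsupp.weight_apply, Finsupp.sum_fintype]
      · simp
      · simp
    simp only [aux_X_mul_pderiv_monomial]
    rw [← Finset.sum_smul, hdeg]
  rw [step, Finset.sum_congr rfl this, ← Finset.smul_sum, ← F.as_sum]

end Aux

theorem stmt_11 {k : Type*} [Field k] [CharZero k] {N : ℕ}
    (F : MvPolynomial (Fin (N + 1)) k) (hF : F.IsHomogeneous 3)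
    -- `F(t) = F(s)²` where `tᵢ = ∂F/∂sᵢ`
    (hgrad : bind₁ (fun j => pderiv j F) F = F ^ 2)
    -- `∂F(t)/∂tᵢ = sᵢ·F(s)` after the substitution `tⱼ = ∂F/∂sⱼ`
    (hinv : ∀ i, bind₁ (fun j => pderiv j F) (pderiv i F) = X i * F)
    -- the Hessian matrix of `F`
    (H : Matrix (Fin (N + 1)) (Fin (N + 1)) (MvPolynomial (Fin (N + 1)) k))
    (hH : ∀ i j, H i j = pderiv i (pderiv j F))
    -- `Q = (q_{ij})` where `∂²F(t)/∂tᵢ∂tⱼ = (1/2)sᵢsⱼ + q_{ij}` after substitution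
    (Q : Matrix (Fin (N + 1)) (Fin (N + 1)) (MvPolynomial (Fin (N + 1)) k))
    (hQ : ∀ i j, bind₁ (fun l => pderiv l F) (pderiv i (pderiv j F))
        = C (1 / 2 : k) * (X i * X j) + Q i j) :
    H * Q = F • (1 : Matrix (Fin (N + 1)) (Fin (N + 1)) (MvPolynomial (Fin (N + 1)) k)) ∧
    Q * H = F • (1 : Matrix (Fin (N + 1)) (Fin (N + 1)) (MvPolynomial (Fin (N + 1)) k)) := by
  -- Euler for the second derivatives
  have e2 : ∀ j, ∑ l, X l * pderiv l (pderiv j F) = (2 : ℕ) • pderiv j F := by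
    intro j
    have e3 := congrArg (pderiv j) (aux_euler hF)
    rw [map_sum, map_nsmul] at e3
    have expand : ∀ l, pderiv j (X l * pderiv l F)
        = pderiv j (X l) * pderiv l F + X l * pderiv l (pderiv j F) := by
      intro l
      rw [pderiv_mul, aux_pderiv_comm]
    rw [Finset.sum_congr rfl (fun l _ => expand l), Finset.sum_add_distrib] at e3
    have h1 : ∑ l, pderiv j (X l : MvPolynomial (Fin (N + 1)) k) * pderiv l F = pderiv j F := by
      rw [Finset.sum_eq_single j]
      · simp
      · intro b _ hb
        simp [pderiv_X_of_ne hb]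
      · intro h; exact absurd (Finset.mem_univ j) h
    rw [h1] at e3
    have : (3 : ℕ) • pderiv j F = pderiv j F + (2 : ℕ) • pderiv j F := by
      rw [← succ_nsmul']
    rw [this] at e3
    exact add_left_cancel e3
  -- symmetry of Q
  have hQsymm : ∀ i j, Q i j = Q j i := by
    intro i j
    have h1 := hQ i j
    rw [aux_pderiv_comm, hQ j i, mul_comm (X j) (X i)] at h1
    exact (add_left_cancel h1).symm
  have hHsymm : ∀ i j, H i j = H j i := by
    intro i j
    rw [hH, hH, aux_pderiv_comm]
  -- the key identity:  (Q * H) i j = δᵢⱼ F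
  have key : ∀ i j, (Q * H) i j
      = (if i = j then F else 0) := by
    intro i j
    have A := congrArg (pderiv j) (hinv i)
    rw [aux_pderiv_bind₁] at A
    have A1 : ∀ l, bind₁ (fun l => pderiv l F) (pderiv l (pderiv i F)) * pderiv j (pderiv l F)
        = (C (1 / 2 : k) * (X l * X i) + Q i l) * H l j := by
      intro l
      rw [hQ l i, hQsymm i l, hH l j, aux_pderiv_comm j l]
    rw [Finset.sum_congr rfl (fun l _ => A1 l)] at A
    -- expand RHS of hinv derivative
    have A2 : pderiv j (X i * F) = pderiv j (X i) * F + X i * pderiv j F := pderiv_mul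
    rw [A2] at A
    -- split the sum
    have split : ∑ l, (C (1 / 2 : k) * (X l * X i) + Q i l) * H l j
        = C (1 / 2 : k) * X i * (∑ l, X l * pderiv l (pderiv j F)) + ∑ l, Q i l * H l j := by
      rw [Finset.mul_sum, ← Finset.sum_add_distrib]
      apply Finset.sum_congr rfl
      intro l _
      rw [hH l j]
      ring
    rw [split, e2 j] at A
    have hhalf : C (1 / 2 : k) * X i * ((2:ℕ) • pderiv j F) = X i * pderiv j F := by
      have h2 : ((2:ℕ) : MvPolynomial (Fin (N+1)) k) = C (2 : k) := by
        exact_mod_cast (C_eq_coe_nat 2).symm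
      rw [nsmul_eq_mul, h2]
      calc C (1/2:k) * X i * (C (2:k) * pderiv j F)
          = C ((1/2:k) * 2) * (X i * pderiv j F) := by rw [C_mul]; ring
        _ = X i * pderiv j F := by norm_num
    rw [hhalf] at A
    have A3 : ∑ l, Q i l * H l j = pderiv j (X i) * F := by
      linear_combination A
    rw [Matrix.mul_apply, A3]
    rcases eq_or_ne i j with rfl | h
    · simp
    · simp [pderiv_X_of_ne (Ne.symm h), h]
  have hQH : Q * H = F • (1 : Matrix (Fin (N + 1)) (Fin (N + 1)) (MvPolynomial (Fin (N + 1)) k)) := by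
    apply Matrix.ext; intro i j
    rw [key i j, Matrix.smul_apply, Matrix.one_apply]
    split <;> simp
  refine ⟨?_, hQH⟩
  -- H * Q = (Q * H)ᵀ since H, Q are symmetric
  have hsym : H * Q = (Q * H)ᵀ := by
    apply Matrix.ext; intro i j
    rw [Matrix.transpose_apply, Matrix.mul_apply, Matrix.mul_apply]
    apply Finset.sum_congr rfl
    intro l _
    rw [hQsymm j l, hHsymm l i, mul_comm]
  rw [hsym, hQH, Matrix.transpose_smul, Matrix.transpose_one]
end

section
/- Let S be a commutative ring, f ∈ S a nonzerodivisor, and (A,B) an n×n matrix factorization of f. Then the 2-periodic complex ... →^{B̄} R^n →^{Ā} R^n →^{B̄} R^n over R = S/(f) is exact: ker(Ā) = im(B̄) and ker(B̄) = im(Ā). -/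
open Matrix

private lemma aux_ker_eq_range {S : Type*} [CommRing S] {n : ℕ} (f : S)
    (hreg : f ∈ nonZeroDivisors S)
    (A B : Matrix (Fin n) (Fin n) S)
    (hAB : A * B = f • (1 : Matrix (Fin n) (Fin n) S))
    (hBA : B * A = f • (1 : Matrix (Fin n) (Fin n) S)) :
    LinearMap.ker (A.map (Ideal.Quotient.mk (Ideal.span {f}))).mulVecLin
      = LinearMap.range (B.map (Ideal.Quotient.mk (Ideal.span {f}))).mulVecLin := by
  set π := Ideal.Quotient.mk (Ideal.span {f}) with hπ
  ext v
  simp only [LinearMap.mem_ker, LinearMap.mem_range, Matrix.mulVecLin_apply]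
  constructor
  · intro hv
    -- lift v to S
    obtain ⟨x, hx⟩ : ∃ x : Fin n → S, π ∘ x = v := by
      choose x hx using fun i => Ideal.Quotient.mk_surjective (I := Ideal.span {f}) (v i)
      exact ⟨x, funext hx⟩
    have hAx : ∀ i, π ((A *ᵥ x) i) = 0 := by
      intro i
      rw [RingHom.map_mulVec, hx]
      exact congrFun hv i
    have hdvd : ∀ i, ∃ y, (A *ᵥ x) i = f * y := by
      intro i
      have := (Ideal.Quotient.eq_zero_iff_mem).mp (hAx i)
      rw [Ideal.mem_span_singleton] at this
      obtain ⟨y, hy⟩ := this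
      exact ⟨y, hy⟩
    choose y hy using hdvd
    have key : ∀ i, f * x i = f * (B *ᵥ y) i := by
      intro i
      have h1 : (B *ᵥ (A *ᵥ x)) i = f * x i := by
        rw [Matrix.mulVec_mulVec, hBA, Matrix.smul_mulVec, Matrix.one_mulVec]
        simp [Pi.smul_apply, smul_eq_mul]
      have h2 : (B *ᵥ (A *ᵥ x)) i = f * (B *ᵥ y) i := by
        have : (A *ᵥ x) = fun j => f * y j := funext hy
        rw [this]
        have : (fun j => f * y j) = f • y := by ext j; simp [smul_eq_mul]
        rw [this, Matrix.mulVec_smul]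
        simp [smul_eq_mul]
      rw [← h1, h2]
    have hxy : x = B *ᵥ y := by
      funext i
      exact (mul_cancel_left_mem_nonZeroDivisors hreg).mp (key i)
    refine ⟨π ∘ y, ?_⟩
    funext i
    rw [← RingHom.map_mulVec, ← hxy]
    exact congrFun hx i
  · rintro ⟨w, rfl⟩
    rw [Matrix.mulVec_mulVec]
    have : A.map π * B.map π = (A * B).map π := (Matrix.map_mul (f := π)).symm
    rw [this, hAB]
    have hf0 : π f = 0 := Ideal.Quotient.eq_zero_iff_mem.mpr (Ideal.mem_span_singleton_self f)
    have : (f • (1 : Matrix (Fin n) (Fin n) S)).map π = 0 := by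
      ext i j
      simp [Matrix.map_apply, Matrix.smul_apply, smul_eq_mul, _root_.map_mul, hf0]
    rw [this, Matrix.zero_mulVec]

theorem stmt_16 {S : Type*} [CommRing S] {n : ℕ} (f : S)
    (hreg : f ∈ nonZeroDivisors S)
    (A B : Matrix (Fin n) (Fin n) S)
    (hAB : A * B = f • (1 : Matrix (Fin n) (Fin n) S))
    (hBA : B * A = f • (1 : Matrix (Fin n) (Fin n) S)) :
    LinearMap.ker (A.map (Ideal.Quotient.mk (Ideal.span {f}))).mulVecLin
      = LinearMap.range (B.map (Ideal.Quotient.mk (Ideal.span {f}))).mulVecLin ∧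
    LinearMap.ker (B.map (Ideal.Quotient.mk (Ideal.span {f}))).mulVecLin
      = LinearMap.range (A.map (Ideal.Quotient.mk (Ideal.span {f}))).mulVecLin := by
  exact ⟨aux_ker_eq_range f hreg A B hAB hBA, aux_ker_eq_range f hreg B A hBA hAB⟩
end
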